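/- For every p ∈ (1, ∞] there exists a constant b_p > 0, depending only on p and on the cut-off function χ, such that for all t ≥ 0 the spatial gradient of the truncated Oseen vortex satisfies ‖∇u^χ(·,t)‖_{L^p(ℝ²)} ≤ b_p (1+t)^{-(1 - 1/p)}. -/

import Mathlib

set_option maxHeartbeats 1600000


open MeasureTheory Real
open scoped ENNReal

noncomputable section

abbrev E2 := EuclideanSpace ℝ (Fin 2)

/-- The rotation `x ↦ x^⊥ = (-x₂, x₁)`. -/
noncomputable def perp (x : E2) : E2 :=
  (WithLp.equiv 2 (Fin 2 → ℝ)).symm ![-(x 1), x 0]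

/-- The Oseen vortex velocity field `Θ(x,t)`. -/
noncomputable def Theta (t : ℝ) (x : E2) : E2 :=
  ((1 / (2 * π)) * (1 - Real.exp (-‖x‖ ^ 2 / (4 * (1 + t)))) / ‖x‖ ^ 2) • perp x

/-- The Oseen vorticity `Ξ(x,t)`. -/
noncomputable def Xi (t : ℝ) (x : E2) : ℝ :=
  (1 / (4 * π * (1 + t))) * Real.exp (-‖x‖ ^ 2 / (4 * (1 + t)))

/-- A smooth radially symmetric cut-off function, nondecreasing along rays,
vanishing on `{‖x‖ ≤ ρ}` and equal to `1` on `{‖x‖ ≥ M}`. -/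
structure IsCutoff (χ : E2 → ℝ) (ρ M : ℝ) : Prop where
  smooth : ContDiff ℝ (⊤ : ℕ∞) χ
  mem01 : ∀ x : E2, χ x ∈ Set.Icc (0 : ℝ) 1
  radial_mono : ∀ x y : E2, ‖x‖ ≤ ‖y‖ → χ x ≤ χ y
  zero_near : ∀ x : E2, ‖x‖ ≤ ρ → χ x = 0
  one_far : ∀ x : E2, M ≤ ‖x‖ → χ x = 1
  rho_pos : 0 < ρ
  rho_lt_M : ρ < M

/-- The truncated Oseen vortex `u^χ(x,t) = χ(x) Θ(x,t)`. -/
noncomputable def uchi (χ : E2 → ℝ) (t : ℝ) (x : E2) : E2 := χ x • Theta t x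

/-- The Laplacian of a scalar function on `ℝ²`. -/
noncomputable def lap (f : E2 → ℝ) (x : E2) : ℝ :=
  ∑ i : Fin 2, fderiv ℝ (fun y => fderiv ℝ f y (EuclideanSpace.single i 1)) x
    (EuclideanSpace.single i 1)

/-- The remainder term `R^χ(x,t) = Θ Δχ + 2 ((x·∇χ)/|x|²)(x^⊥ Ξ − Θ)`. -/
noncomputable def Rchi (χ : E2 → ℝ) (t : ℝ) (x : E2) : E2 :=
  lap χ x • Theta t x + (2 * fderiv ℝ χ x x / ‖x‖ ^ 2) • (Xi t x • perp x - Theta t x)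

lemma perp_apply (x : E2) (i : Fin 2) : perp x i = ![-(x 1), x 0] i := rfl
lemma norm_perp (x : E2) : ‖perp x‖ = ‖x‖ := by
  rw [EuclideanSpace.norm_eq, EuclideanSpace.norm_eq]
  congr 1
  simp [Fin.sum_univ_two, perp_apply]; ring
noncomputable def perpCLM : E2 →L[ℝ] E2 :=
  LinearMap.toContinuousLinearMap
  { toFun := perp
    map_add' := by intro x y; ext i; fin_cases i <;> simp [perp_apply] <;> ring
    map_smul' := by intro c x; ext i; fin_cases i <;> simp [perp_apply] <;> ring }
lemma perpCLM_apply (x : E2) : perpCLM x = perp x := rfl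
lemma norm_perpCLM_le : ‖perpCLM‖ ≤ 1 := by
  refine ContinuousLinearMap.opNorm_le_bound _ zero_le_one (fun x => ?_)
  rw [perpCLM_apply, norm_perp, one_mul]

-- basic exp inequalities
lemma exp_ineq1 {s : ℝ} (hs : 0 ≤ s) : 0 ≤ 1 - Real.exp (-s) := by
  have := Real.exp_le_one_iff.mpr (neg_nonpos.mpr hs); linarith
lemma exp_ineq2 {s : ℝ} : 1 - Real.exp (-s) ≤ 1 := by have := Real.exp_pos (-s); linarith
lemma exp_ineq3 {s : ℝ} : 1 - Real.exp (-s) ≤ s := by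
  have := Real.add_one_le_exp (-s); linarith
lemma exp_ineq4 {s : ℝ} (hs : 0 ≤ s) : 0 ≤ 1 - Real.exp (-s) - s * Real.exp (-s) := by
  have h1 := Real.add_one_le_exp s
  have h2 := Real.exp_pos (-s)
  have h3 : Real.exp s * Real.exp (-s) = 1 := by
    rw [← Real.exp_add]; simp
  nlinarith

/-- Derivative of Theta with norm bound, for `x ≠ 0`, `t ≥ 0`. -/
lemma theta_deriv (t : ℝ) (ht : 0 ≤ t) {x : E2} (hx : x ≠ 0) :
    ∃ D : E2 →L[ℝ] E2, HasFDerivAt (Theta t) D x ∧ ‖D‖ ≤ 1 / (1 + t + ‖x‖ ^ 2) := by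
  set τ : ℝ := 1 + t with hτdef
  have hτ : 1 ≤ τ := by simp [hτdef]; linarith
  have hτ0 : 0 < τ := by linarith
  have hxn : 0 < ‖x‖ := norm_pos_iff.mpr hx
  have hu : 0 < ‖x‖ ^ 2 := by positivity
  set u : ℝ := ‖x‖ ^ 2 with hudef
  set c : ℝ := 1 / (2 * π) with hcdef
  have hc : 0 < c := by have := Real.pi_pos; positivity
  set E : ℝ := Real.exp (-u / (4 * τ)) with hEdef
  -- derivative of the scalar profile F v = c * (1 - exp (-v/(4τ))) / v at u
  have hF : HasDerivAt (fun v : ℝ => c * (1 - Real.exp (-v / (4 * τ))) / v)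
      ((c * (E * (1 / (4 * τ))) * u - c * (1 - E) * 1) / u ^ 2) u := by
    have h1 : HasDerivAt (fun v : ℝ => -v / (4 * τ)) (-1 / (4 * τ)) u := by
      simpa using ((hasDerivAt_id u).neg.div_const (4 * τ))
    have h2 : HasDerivAt (fun v : ℝ => Real.exp (-v / (4 * τ))) (E * (-1 / (4 * τ))) u := by
      simpa [hEdef] using h1.exp
    have h3 : HasDerivAt (fun v : ℝ => c * (1 - Real.exp (-v / (4 * τ))))
        (c * (E * (1 / (4 * τ)))) u := by
      have := ((hasDerivAt_const u (1 : ℝ)).sub h2).const_mul c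
      exact this.congr_deriv (by ring)
    exact h3.div (hasDerivAt_id u) (ne_of_gt hu)
  have hq : HasFDerivAt (fun y : E2 => ‖y‖ ^ 2) (2 • (innerSL ℝ x)) x :=
    (hasStrictFDerivAt_norm_sq x).hasFDerivAt
  have hS : HasFDerivAt (fun y : E2 => c * (1 - Real.exp (-‖y‖ ^ 2 / (4 * τ))) / ‖y‖ ^ 2)
      (((c * (E * (1 / (4 * τ))) * u - c * (1 - E) * 1) / u ^ 2) • (2 • (innerSL ℝ x))) x :=
    by have := hF.comp_hasFDerivAt x hq; exact this
  have hperp : HasFDerivAt (fun y : E2 => perpCLM y) perpCLM x := perpCLM.hasFDerivAt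
  have hth : HasFDerivAt (Theta t)
      ((c * (1 - E) / u) • perpCLM +
        ((((c * (E * (1 / (4 * τ))) * u - c * (1 - E) * 1) / u ^ 2) •
          (2 • (innerSL ℝ x))).smulRight (perpCLM x))) x := by
    have := hS.smul hperp
    convert this using 2 <;> rfl
  refine ⟨_, hth, ?_⟩
  -- now the norm bound
  set s : ℝ := u / (4 * τ) with hsdef
  have hs : 0 ≤ s := by positivity
  have hE : E = Real.exp (-s) := by rw [hEdef, hsdef]; ring_nf
  have hg0 : 0 ≤ 1 - E - s * E := by rw [hE]; exact exp_ineq4 hs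
  have hg1 : 1 - E ≤ 1 := by rw [hE]; exact exp_ineq2
  have hgs : 1 - E ≤ s := by rw [hE]; exact exp_ineq3
  have hA0 : 0 ≤ 1 - E := by rw [hE]; exact exp_ineq1 hs
  have hEpos : 0 < E := by rw [hE]; exact Real.exp_pos _
  have hsE : 0 ≤ s * E := by positivity
  set G1 : ℝ := 1 - E with hG1
  set G2 : ℝ := 1 - E - s * E with hG2
  have hnorm1 : ‖(c * G1 / u) • perpCLM‖ ≤ c * G1 / u := by
    have hns := norm_smul (c * G1 / u) perpCLM
    rw [hns, Real.norm_eq_abs, abs_of_nonneg (by positivity)]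
    calc c * G1 / u * ‖perpCLM‖ ≤ c * G1 / u * 1 :=
          mul_le_mul_of_nonneg_left norm_perpCLM_le (by positivity)
      _ = c * G1 / u := mul_one _
  have hinner : ‖(2 : ℕ) • (innerSL ℝ x)‖ ≤ 2 * ‖x‖ := by
    rw [two_smul]
    calc ‖innerSL ℝ x + innerSL ℝ x‖ ≤ ‖innerSL ℝ x‖ + ‖innerSL ℝ x‖ := norm_add_le _ _
      _ = 2 * ‖x‖ := by rw [innerSL_apply_norm]; ring
  set d : ℝ := (c * (E * (1 / (4 * τ))) * u - c * (1 - E) * 1) / u ^ 2 with hd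
  have hdval : d = -(c * G2) / u ^ 2 := by
    have h1 : c * (E * (1 / (4 * τ))) * u = c * (E * s) := by
      rw [hsdef]; field_simp
    rw [hd, hG2, h1]; ring
  have habs : |d| = c * G2 / u ^ 2 := by
    rw [hdval, abs_div, abs_neg, abs_of_nonneg (by positivity : (0:ℝ) ≤ c * G2),
      abs_of_nonneg (by positivity : (0:ℝ) ≤ u ^ 2)]
  have hnorm2 : ‖(d • ((2 : ℕ) • (innerSL ℝ x))).smulRight (perpCLM x)‖ ≤ 2 * c * G2 / u := by
    have hns := norm_smul d ((2:ℕ) • (innerSL ℝ x))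
    rw [ContinuousLinearMap.norm_smulRight_apply, hns, Real.norm_eq_abs, habs,
      perpCLM_apply, norm_perp]
    have step1 : c * G2 / u ^ 2 * ‖(2:ℕ) • (innerSL ℝ x)‖ * ‖x‖
        ≤ c * G2 / u ^ 2 * (2 * ‖x‖) * ‖x‖ := by
      have hnn : (0:ℝ) ≤ c * G2 / u ^ 2 := by positivity
      nlinarith [mul_le_mul_of_nonneg_left hinner hnn, hxn.le,
        mul_le_mul_of_nonneg_right (mul_le_mul_of_nonneg_left hinner hnn) hxn.le]
    have step2 : c * G2 / u ^ 2 * (2 * ‖x‖) * ‖x‖ = 2 * c * G2 / u := by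
      rw [hudef]; field_simp
    linarith
  have hsum : ‖(c * G1 / u) • perpCLM +
      (d • ((2:ℕ) • (innerSL ℝ x))).smulRight (perpCLM x)‖ ≤ c * G1 / u + 2 * c * G2 / u :=
    (norm_add_le _ _).trans (add_le_add hnorm1 hnorm2)
  refine hsum.trans ?_
  have hcomb : c * G1 / u + 2 * c * G2 / u = c * (G1 + 2 * G2) / u := by ring
  rw [hcomb, div_le_div_iff₀ hu (by linarith : (0:ℝ) < τ + u)]
  have hc6 : c ≤ 1 / 6 := by
    rw [hcdef]
    have : (6:ℝ) ≤ 2 * π := by nlinarith [Real.pi_gt_three]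
    exact one_div_le_one_div_of_le (by norm_num) this
  have hG2G1 : G2 ≤ G1 := by rw [hG1, hG2]; linarith
  have hG20 : 0 ≤ G2 := hg0
  have hG10 : 0 ≤ G1 := hA0
  have hs4 : 4 * τ * s = u := by rw [hsdef]; field_simp
  have h1τu : 1 * (τ + u) = τ + u := one_mul _
  clear_value τ u c E s G1 G2 d
  rcases le_or_gt u (4 * τ) with hcase | hcase
  · -- small u: use G1 + 2 G2 ≤ 3 s
    have e1 : G1 + 2 * G2 ≤ 3 * s := by
      have : G1 ≤ s := hgs
      linarith [hG2G1]
    have e2 : τ + u ≤ 5 * τ := by linarith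
    have e3 : c * (G1 + 2 * G2) * (τ + u) ≤ c * (3 * s) * (5 * τ) := by
      have h1 : c * (G1 + 2 * G2) ≤ c * (3 * s) := mul_le_mul_of_nonneg_left e1 hc.le
      have h2 : (0:ℝ) ≤ c * (G1 + 2 * G2) := by positivity
      nlinarith [mul_le_mul h1 e2 (by linarith) (by positivity : (0:ℝ) ≤ c * (3 * s))]
    have e4 : c * (3 * s) * (5 * τ) = (15 / 4) * c * u := by
      linear_combination (15 / 4 * c) * hs4
    rw [one_mul]
    have h6 : c * u ≤ (1 / 6) * u := mul_le_mul_of_nonneg_right hc6 hu.le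
    have e5 : (15 / 4) * c * u = (15 / 4) * (c * u) := by ring
    linarith [e3, e4, h6, hu.le]
  · -- large u: use G1 + 2 G2 ≤ 3
    have e1 : G1 + 2 * G2 ≤ 3 := by linarith
    have e2 : τ + u ≤ (5 / 4) * u := by linarith
    have e3 : c * (G1 + 2 * G2) * (τ + u) ≤ c * 3 * ((5 / 4) * u) := by
      have h1 : c * (G1 + 2 * G2) ≤ c * 3 := mul_le_mul_of_nonneg_left e1 hc.le
      nlinarith [mul_le_mul h1 e2 (by linarith) (by positivity : (0:ℝ) ≤ c * 3)]
    rw [one_mul]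
    have h6 : c * u ≤ (1 / 6) * u := mul_le_mul_of_nonneg_right hc6 hu.le
    have e5 : c * 3 * ((5 / 4) * u) = (15 / 4) * (c * u) := by ring
    linarith [e3, e5, h6, hu.le]

/-- Norm bounds for Theta itself. -/
lemma theta_norm_le (t : ℝ) (ht : 0 ≤ t) {x : E2} (hx : x ≠ 0) :
    ‖Theta t x‖ ≤ (1 / (2 * π)) * (1 / ‖x‖) ∧
      ‖Theta t x‖ ≤ (1 / (2 * π)) * (‖x‖ / (4 * (1 + t))) := by
  have hτ0 : (0:ℝ) < 1 + t := by linarith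
  have hxn : 0 < ‖x‖ := norm_pos_iff.mpr hx
  have hxn : 0 < ‖x‖ := norm_pos_iff.mpr hx
  have hu : 0 < ‖x‖ ^ 2 := by positivity
  have hc : 0 < 1 / (2 * π) := by have := Real.pi_pos; positivity
  set s : ℝ := ‖x‖ ^ 2 / (4 * (1 + t)) with hsdef
  have hs : 0 ≤ s := by positivity
  have hE : (-‖x‖ ^ 2 / (4 * (1 + t))) = -s := by rw [hsdef]; ring
  have h1 : 0 ≤ 1 - Real.exp (-‖x‖ ^ 2 / (4 * (1 + t))) := by rw [hE]; exact exp_ineq1 hs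
  have h2 : 1 - Real.exp (-‖x‖ ^ 2 / (4 * (1 + t))) ≤ 1 := by rw [hE]; exact exp_ineq2
  have h3 : 1 - Real.exp (-‖x‖ ^ 2 / (4 * (1 + t))) ≤ s := by rw [hE]; exact exp_ineq3
  have hval : ‖Theta t x‖ =
      1 / (2 * π) * (1 - Real.exp (-‖x‖ ^ 2 / (4 * (1 + t)))) / ‖x‖ ^ 2 * ‖x‖ := by
    rw [Theta, norm_smul, norm_perp, Real.norm_eq_abs, abs_of_nonneg (by positivity)]
  constructor
  · rw [hval]
    rw [div_mul_eq_mul_div, div_le_iff₀ hu]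
    have heq : 1 / (2 * π) * (1 / ‖x‖) * ‖x‖ ^ 2 = 1 / (2 * π) * ‖x‖ := by
      field_simp
    rw [heq]
    nlinarith [mul_le_mul_of_nonneg_left (mul_le_mul_of_nonneg_right h2 hxn.le) hc.le]
  · rw [hval]
    rw [div_mul_eq_mul_div, div_le_iff₀ hu]
    have k1 : 1 / (2 * π) * (1 - Real.exp (-‖x‖ ^ 2 / (4 * (1 + t)))) * ‖x‖ ≤
        1 / (2 * π) * s * ‖x‖ := by
      nlinarith [mul_le_mul_of_nonneg_left (mul_le_mul_of_nonneg_right h3 hxn.le) hc.le]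
    have k2 : 1 / (2 * π) * s * ‖x‖ = 1 / (2 * π) * (‖x‖ / (4 * (1 + t))) * ‖x‖ ^ 2 := by
      rw [hsdef]; field_simp
    linarith

lemma cutoff_deriv_zero_far {χ : E2 → ℝ} {ρ M : ℝ} (hχ : IsCutoff χ ρ M) {x : E2}
    (hM : M ≤ ‖x‖) : fderiv ℝ χ x = 0 := by
  have hmax : IsLocalMax χ x := by
    refine Filter.Eventually.of_forall (fun y => ?_)
    rw [hχ.one_far x hM]
    exact (hχ.mem01 y).2
  exact hmax.fderiv_eq_zero

lemma cutoff_deriv_bound {χ : E2 → ℝ} {ρ M : ℝ} (hχ : IsCutoff χ ρ M) :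
    ∃ L : ℝ, 0 ≤ L ∧ ∀ x : E2, ‖fderiv ℝ χ x‖ ≤ L := by
  have hcont : Continuous (fun x => fderiv ℝ χ x) := (hχ.smooth.fderiv_right (m := (⊤ : ℕ∞)) (by simp)).continuous
  have hcomp : IsCompact (Metric.closedBall (0 : E2) (M + 1)) := isCompact_closedBall _ _
  obtain ⟨C, hC⟩ := hcomp.exists_bound_of_continuousOn (hcont.continuousOn (s := Metric.closedBall 0 (M + 1)))
  refine ⟨max C 0, le_max_right _ _, fun x => ?_⟩
  rcases le_or_gt ‖x‖ (M + 1) with hx | hx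
  · exact le_trans (hC x (by simpa [Metric.mem_closedBall, dist_zero_right] using hx)) (le_max_left _ _)
  · rw [cutoff_deriv_zero_far hχ (by linarith)]
    simp [le_max_right]

/-- The main pointwise bound on the gradient of the truncated vortex. -/
lemma uchi_deriv_bound {χ : E2 → ℝ} {ρ M : ℝ} (hχ : IsCutoff χ ρ M) {L : ℝ} (hL0 : 0 ≤ L)
    (hL : ∀ x : E2, ‖fderiv ℝ χ x‖ ≤ L) {t : ℝ} (ht : 0 ≤ t) (x : E2) :
    ‖fderiv ℝ (uchi χ t) x‖ ≤ (1 + L * (M / 4 + M ^ 2 / ρ)) / (1 + t + ‖x‖ ^ 2) := by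
  have hρ : 0 < ρ := hχ.rho_pos
  have hM : 0 < M := lt_trans hρ hχ.rho_lt_M
  have hτ0 : (0:ℝ) < 1 + t := by linarith
  have hτu : (0:ℝ) < 1 + t + ‖x‖ ^ 2 := by positivity
  have hKnn : (0:ℝ) ≤ 1 + L * (M / 4 + M ^ 2 / ρ) := by positivity
  rcases lt_or_ge ‖x‖ ρ with h | h
  · -- inside the ball: uchi vanishes near x
    have hev : uchi χ t =ᶠ[nhds x] (fun _ => (0 : E2)) := by
      have hmem : Metric.ball (0 : E2) ρ ∈ nhds x :=
        Metric.isOpen_ball.mem_nhds (by simpa [mem_ball_zero_iff] using h)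
      filter_upwards [hmem] with y hy
      rw [uchi, hχ.zero_near y (le_of_lt (mem_ball_zero_iff.mp hy)), zero_smul]
    have : fderiv ℝ (uchi χ t) x = 0 := by
      rw [hev.fderiv_eq]; exact fderiv_const_apply 0
    rw [this, norm_zero]
    positivity
  · -- outside: product rule
    have hx0 : x ≠ 0 := by
      intro hh; rw [hh, norm_zero] at h; linarith
    have hxn : 0 < ‖x‖ := norm_pos_iff.mpr hx0
    obtain ⟨D, hD, hDle⟩ := theta_deriv t ht hx0
    have hχd : HasFDerivAt χ (fderiv ℝ χ x) x :=
      (hχ.smooth.differentiable (by simp) x).hasFDerivAt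
    have huchi : HasFDerivAt (uchi χ t)
        (χ x • D + (fderiv ℝ χ x).smulRight (Theta t x)) x := hχd.smul hD
    rw [huchi.fderiv]
    have hns := norm_smul (χ x) D
    have hbound1 : ‖χ x • D‖ ≤ ‖D‖ := by
      rw [hns, Real.norm_eq_abs, abs_of_nonneg (hχ.mem01 x).1]
      exact mul_le_of_le_one_left (norm_nonneg _) (hχ.mem01 x).2
    have hbound1' : ‖χ x • D‖ ≤ 1 / (1 + t + ‖x‖ ^ 2) := hbound1.trans hDle
    have hTn := theta_norm_le t ht hx0
    have hbound2 : ‖(fderiv ℝ χ x).smulRight (Theta t x)‖ ≤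
        L * (M / 4 + M ^ 2 / ρ) / (1 + t + ‖x‖ ^ 2) := by
      rw [ContinuousLinearMap.norm_smulRight_apply]
      rcases le_or_gt M ‖x‖ with hMx | hMx
      · rw [cutoff_deriv_zero_far hχ hMx]
        simp only [norm_zero, zero_mul]
        positivity
      · -- on the annulus
        have hc1 : (1:ℝ) / (2 * π) ≤ 1 := by
          have h6 : (1:ℝ) ≤ 2 * π := by nlinarith [Real.pi_gt_three]
          rw [div_le_one (by linarith)]; linarith
        have hT0 : 0 ≤ ‖Theta t x‖ := norm_nonneg _
        have h1 : ‖Theta t x‖ ≤ 1 / ρ := by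
          refine hTn.1.trans ?_
          calc 1 / (2 * π) * (1 / ‖x‖) ≤ 1 * (1 / ‖x‖) :=
                mul_le_mul_of_nonneg_right hc1 (by positivity)
            _ = 1 / ‖x‖ := one_mul _
            _ ≤ 1 / ρ := one_div_le_one_div_of_le hρ h
        have h2 : ‖Theta t x‖ ≤ M / (4 * (1 + t)) := by
          refine hTn.2.trans ?_
          calc 1 / (2 * π) * (‖x‖ / (4 * (1 + t))) ≤ 1 * (‖x‖ / (4 * (1 + t))) :=
                mul_le_mul_of_nonneg_right hc1 (by positivity)
            _ = ‖x‖ / (4 * (1 + t)) := one_mul _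
            _ ≤ M / (4 * (1 + t)) := by gcongr
        have hkey : ‖Theta t x‖ * (1 + t + ‖x‖ ^ 2) ≤ M / 4 + M ^ 2 / ρ := by
          have e1 : ‖Theta t x‖ * (1 + t) ≤ M / 4 := by
            have e0 := mul_le_mul_of_nonneg_right h2 hτ0.le
            have e : M / (4 * (1 + t)) * (1 + t) = M / 4 := by field_simp
            linarith
          have e2 : ‖Theta t x‖ * ‖x‖ ^ 2 ≤ M ^ 2 / ρ := by
            have hu2 : ‖x‖ ^ 2 ≤ M ^ 2 := by nlinarith [hxn.le, hMx.le]
            calc ‖Theta t x‖ * ‖x‖ ^ 2 ≤ (1 / ρ) * M ^ 2 :=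
                  mul_le_mul h1 hu2 (by positivity) (by positivity)
              _ = M ^ 2 / ρ := by ring
          nlinarith [e1, e2]
        have hθb : ‖Theta t x‖ ≤ (M / 4 + M ^ 2 / ρ) / (1 + t + ‖x‖ ^ 2) := by
          rw [le_div_iff₀ hτu]; exact hkey
        calc ‖fderiv ℝ χ x‖ * ‖Theta t x‖
            ≤ L * ((M / 4 + M ^ 2 / ρ) / (1 + t + ‖x‖ ^ 2)) :=
              mul_le_mul (hL x) hθb hT0 hL0
          _ = L * (M / 4 + M ^ 2 / ρ) / (1 + t + ‖x‖ ^ 2) := by ring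
    calc ‖χ x • D + (fderiv ℝ χ x).smulRight (Theta t x)‖
        ≤ ‖χ x • D‖ + ‖(fderiv ℝ χ x).smulRight (Theta t x)‖ := norm_add_le _ _
      _ ≤ 1 / (1 + t + ‖x‖ ^ 2) + L * (M / 4 + M ^ 2 / ρ) / (1 + t + ‖x‖ ^ 2) :=
          add_le_add hbound1' hbound2
      _ = (1 + L * (M / 4 + M ^ 2 / ρ)) / (1 + t + ‖x‖ ^ 2) := by ring

open scoped ENNReal

/-- The scaled Japanese-bracket lintegral is finite. -/
lemma bracket_lintegral_lt_top {q : ℝ} (hq : 1 < q) :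
    (∫⁻ y : E2, ENNReal.ofReal ((1 + ‖y‖ ^ 2) ^ (-q)) ∂volume) < ⊤ := by
  have hfin : (Module.finrank ℝ E2 : ℝ) < 2 * q := by
    rw [finrank_euclideanSpace_fin]; push_cast; linarith
  have hint := integrable_rpow_neg_one_add_norm_sq (μ := (volume : Measure E2)) hfin
  have hfi := hint.hasFiniteIntegral
  rw [MeasureTheory.hasFiniteIntegral_iff_ofReal
    (Filter.Eventually.of_forall (fun y => by positivity))] at hfi
  refine lt_of_eq_of_lt ?_ hfi
  refine lintegral_congr fun y => ?_
  congr 1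
  ring_nf

/-- Scaling computation for the majorant's `q`-lintegral. -/
lemma majorant_lintegral {q : ℝ} (hq : 1 < q) {K : ℝ} (hK : 0 < K) {t : ℝ} (ht : 0 ≤ t) :
    ∫⁻ x : E2, ENNReal.ofReal (K / (1 + t + ‖x‖ ^ 2)) ^ q ∂volume
      = ENNReal.ofReal ((K / (1 + t)) ^ q) * ENNReal.ofReal (1 + t) *
        ∫⁻ y : E2, ENNReal.ofReal ((1 + ‖y‖ ^ 2) ^ (-q)) ∂volume := by
  have hτ : (0:ℝ) < 1 + t := by linarith
  set τ : ℝ := 1 + t with hτdef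
  set r : ℝ := Real.sqrt τ with hrdef
  have hr : 0 < r := Real.sqrt_pos.mpr hτ
  have hr2 : r ^ 2 = τ := Real.sq_sqrt hτ.le
  have hq0 : (0:ℝ) < q := by linarith
  set H : E2 → ℝ≥0∞ := fun y => ENNReal.ofReal ((1 + ‖y‖ ^ 2) ^ (-q)) with hHdef
  have hH : Measurable H := by
    refine ENNReal.measurable_ofReal.comp ?_
    exact ((continuous_const.add ((continuous_norm).pow 2)).rpow_const
      (fun y => Or.inl (by simp only [Pi.add_apply, Pi.pow_apply]; positivity))).measurable
  have hpt : ∀ x : E2, ENNReal.ofReal (K / (τ + ‖x‖ ^ 2)) ^ q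
      = ENNReal.ofReal ((K / τ) ^ q) * H ((r⁻¹ : ℝ) • x) := by
    intro x
    have hxr : ‖(r⁻¹ : ℝ) • x‖ ^ 2 = ‖x‖ ^ 2 / τ := by
      rw [norm_smul, Real.norm_eq_abs, abs_of_pos (inv_pos.mpr hr), mul_pow, ← hr2]
      field_simp
    have h1τ : (0:ℝ) < 1 + ‖x‖ ^ 2 / τ := by positivity
    rw [hHdef]
    simp only []
    rw [hxr]
    rw [ENNReal.ofReal_rpow_of_nonneg (by positivity) hq0.le]
    rw [← ENNReal.ofReal_mul (by positivity)]
    congr 1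
    rw [Real.rpow_neg h1τ.le, ← Real.inv_rpow h1τ.le,
      ← Real.mul_rpow (by positivity) (by positivity)]
    congr 1
    have hden : τ * (1 + ‖x‖ ^ 2 / τ) = τ + ‖x‖ ^ 2 := by field_simp
    rw [inv_eq_one_div, div_mul_div_comm, mul_one, hden]
  calc ∫⁻ x : E2, ENNReal.ofReal (K / (τ + ‖x‖ ^ 2)) ^ q ∂volume
      = ∫⁻ x : E2, ENNReal.ofReal ((K / τ) ^ q) * H ((r⁻¹ : ℝ) • x) ∂volume :=
        lintegral_congr hpt
    _ = ENNReal.ofReal ((K / τ) ^ q) * ∫⁻ x : E2, H ((r⁻¹ : ℝ) • x) ∂volume :=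
        lintegral_const_mul _ (hH.comp (measurable_id.const_smul (r⁻¹ : ℝ)))
    _ = ENNReal.ofReal ((K / τ) ^ q) * (ENNReal.ofReal τ * ∫⁻ y, H y ∂volume) := by
        congr 1
        have hmap := MeasureTheory.Measure.map_addHaar_smul (volume : Measure E2)
          (r := (r⁻¹ : ℝ)) (inv_ne_zero hr.ne')
        have hgm : Measurable (fun x : E2 => (r⁻¹ : ℝ) • x) :=
          measurable_id.const_smul (r⁻¹ : ℝ)
        have hlm : ∫⁻ y, H y ∂(Measure.map (fun x : E2 => (r⁻¹ : ℝ) • x) volume)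
            = ∫⁻ x, H ((r⁻¹ : ℝ) • x) ∂volume := lintegral_map hH hgm
        rw [← hlm]
        rw [show (fun x : E2 => (r⁻¹ : ℝ) • x) = ((r⁻¹ : ℝ) • ·) from rfl, hmap,
          lintegral_smul_measure]
        congr 1
        rw [finrank_euclideanSpace_fin]
        rw [abs_of_pos (by positivity)]
        rw [← hr2]
        field_simp
    _ = _ := by rw [hτdef]; ring

/-- For every `p ∈ (1,∞]` there is `b_p > 0`, depending only on `p` and `χ`, such that
`‖∇u^χ(·,t)‖_{L^p(ℝ²)} ≤ b_p (1+t)^{-(1 - 1/p)}` for all `t ≥ 0`. -/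
theorem grad_uchi_Lp_bound (χ : E2 → ℝ) (ρ M : ℝ) (hχ : IsCutoff χ ρ M)
    (p : ℝ≥0∞) (hp : 1 < p) :
    ∃ b : ℝ, 0 < b ∧ ∀ t : ℝ, 0 ≤ t →
      eLpNorm (fun x => fderiv ℝ (uchi χ t) x) p volume ≤
        ENNReal.ofReal (b * (1 + t) ^ (-(1 - 1 / p.toReal))) := by
  obtain ⟨L, hL0, hL⟩ := cutoff_deriv_bound hχ
  have hρ : 0 < ρ := hχ.rho_pos
  have hM : 0 < M := lt_trans hρ hχ.rho_lt_M
  set K : ℝ := 1 + L * (M / 4 + M ^ 2 / ρ) with hKdef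
  have hK : 0 < K := by positivity
  by_cases hptop : p = ∞
  · subst hptop
    refine ⟨K, hK, fun t ht => ?_⟩
    have hτ : (0:ℝ) < 1 + t := by linarith
    have hbd : ∀ x : E2, ‖fderiv ℝ (uchi χ t) x‖ ≤ K / (1 + t) := by
      intro x
      refine (uchi_deriv_bound hχ hL0 hL ht x).trans ?_
      rw [← hKdef, div_le_div_iff₀ (by positivity) hτ]
      have hKe := hK.le
      clear_value K
      nlinarith [hKe, sq_nonneg ‖x‖, mul_nonneg hKe (sq_nonneg ‖x‖)]
    have h1 := eLpNorm_le_of_ae_bound (μ := (volume : Measure E2)) (p := (⊤:ℝ≥0∞))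
      (f := fun x => fderiv ℝ (uchi χ t) x) (Filter.Eventually.of_forall hbd)
    refine h1.trans ?_
    have hone : (volume : Measure E2) Set.univ ^ (⊤:ℝ≥0∞).toReal⁻¹ = 1 := by
      simp [ENNReal.toReal_top]
    rw [hone, one_mul]
    apply ENNReal.ofReal_le_ofReal
    have hexp : -(1 - 1 / ((⊤:ℝ≥0∞).toReal)) = (-1 : ℝ) := by
      rw [ENNReal.toReal_top]; norm_num
    rw [hexp, Real.rpow_neg_one, div_eq_mul_inv]
  · -- finite p
    have hppos : p ≠ 0 := by
      intro h; rw [h] at hp; exact absurd hp (by simp)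
    have hq1 : 1 < p.toReal := by
      have h2 := ENNReal.toReal_strict_mono hptop hp
      simpa using h2
    have hq0 : 0 < p.toReal := by linarith
    set A : ℝ≥0∞ := ∫⁻ y : E2, ENNReal.ofReal ((1 + ‖y‖ ^ 2) ^ (-p.toReal)) ∂volume with hAdef
    have hA : A < ⊤ := bracket_lintegral_lt_top hq1
    set b : ℝ := K * (A.toReal ^ (1 / p.toReal) + 1) with hbdef
    have hb : 0 < b := by positivity
    refine ⟨b, hb, fun t ht => ?_⟩
    have hτ : (0:ℝ) < 1 + t := by linarith
    have step1 : eLpNorm (fun x => fderiv ℝ (uchi χ t) x) p volume ≤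
        eLpNorm (fun x : E2 => K / (1 + t + ‖x‖ ^ 2)) p volume :=
      eLpNorm_mono_real (fun x => uchi_deriv_bound hχ hL0 hL ht x)
    refine step1.trans ?_
    rw [eLpNorm_eq_lintegral_rpow_enorm_toReal hppos hptop]
    have hnn : ∀ x : E2, (‖K / (1 + t + ‖x‖ ^ 2)‖ₑ) ^ p.toReal
        = ENNReal.ofReal (K / (1 + t + ‖x‖ ^ 2)) ^ p.toReal := by
      intro x; rw [Real.enorm_eq_ofReal (by positivity)]
    rw [lintegral_congr (fun x => hnn x)]
    rw [majorant_lintegral hq1 hK ht]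
    -- now rpow juggling
    have hinvq : (0:ℝ) ≤ 1 / p.toReal := by positivity
    rw [ENNReal.mul_rpow_of_nonneg _ _ hinvq, ENNReal.mul_rpow_of_nonneg _ _ hinvq]
    have e1 : (ENNReal.ofReal ((K / (1 + t)) ^ p.toReal)) ^ (1 / p.toReal)
        = ENNReal.ofReal (K / (1 + t)) := by
      rw [ENNReal.ofReal_rpow_of_nonneg (by positivity) hinvq]
      congr 1
      rw [← Real.rpow_mul (by positivity), mul_one_div_cancel hq0.ne', Real.rpow_one]
    have e2 : (ENNReal.ofReal (1 + t)) ^ (1 / p.toReal)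
        = ENNReal.ofReal ((1 + t) ^ (1 / p.toReal)) :=
      ENNReal.ofReal_rpow_of_nonneg (by positivity) hinvq
    have e3 : A ^ (1 / p.toReal) = ENNReal.ofReal (A.toReal ^ (1 / p.toReal)) := by
      have hAeq : A = ENNReal.ofReal A.toReal := (ENNReal.ofReal_toReal hA.ne).symm
      conv_lhs => rw [hAeq]
      exact ENNReal.ofReal_rpow_of_nonneg ENNReal.toReal_nonneg hinvq
    rw [e1, e2, e3, ← ENNReal.ofReal_mul (by positivity),
      ← ENNReal.ofReal_mul (by positivity)]
    apply ENNReal.ofReal_le_ofReal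
    have hpow : K / (1 + t) * (1 + t) ^ (1 / p.toReal)
        = K * (1 + t) ^ (-(1 - 1 / p.toReal)) := by
      rw [show -(1 - 1 / p.toReal) = 1 / p.toReal + (-1) by ring, Real.rpow_add hτ,
        Real.rpow_neg_one]
      ring
    have ha : 0 ≤ A.toReal ^ (1 / p.toReal) := Real.rpow_nonneg ENNReal.toReal_nonneg _
    have he : 0 ≤ (1 + t) ^ (-(1 - 1 / p.toReal)) := Real.rpow_nonneg hτ.le _
    calc K / (1 + t) * (1 + t) ^ (1 / p.toReal) * A.toReal ^ (1 / p.toReal)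
        = K * (1 + t) ^ (-(1 - 1 / p.toReal)) * A.toReal ^ (1 / p.toReal) := by rw [hpow]
      _ ≤ K * (A.toReal ^ (1 / p.toReal) + 1) * (1 + t) ^ (-(1 - 1 / p.toReal)) := by
          have hKe := hK.le
          have hKeH := mul_nonneg hKe he
          clear_value K A
          nlinarith [hKeH, ha, he, hKe]
      _ = b * (1 + t) ^ (-(1 - 1 / p.toReal)) := by rw [hbdef]

end
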